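/- arXiv:1404.7264 — 5 statements merged into one kernel-verified Lean document; each statement's English description precedes it below -/
import Mathlib

section
/- With H = H_0 ⋉ D as above (D ≠ {1}, H_0 not a group), the projection θ: H → H_0, (a,d) ↦ a, is a transfer homomorphism. -/
/- We model `H₀` and `D` as submonoids (subsets closed under `1` and `*`) of their quotient
groups `G₁`, `G₂`, and `H = H₀ ⋉ D` as a subset of `G₁ × G₂`. The projection
`θ : H → H₀, (a,d) ↦ a` is a transfer homomorphism: (T1) every element of `H₀` is
`θ(u)·ε` for some `u ∈ H` and unit `ε` of `H₀`, and `θ⁻¹(H₀^×) = H^×`; (T2) factorizations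
`θ(u) = b·c` lift to `u = v·w` with `θ(v)` associated to `b` and `θ(w)` associated to `c`. -/
theorem stmt13 {G₁ G₂ : Type*} [CommGroup G₁] [CommGroup G₂]
    (H₀ : Set G₁) (D : Set G₂)
    (h₀1 : (1 : G₁) ∈ H₀) (h₀m : ∀ a ∈ H₀, ∀ b ∈ H₀, a * b ∈ H₀)
    (hq₁ : ∀ g : G₁, ∃ a ∈ H₀, ∃ b ∈ H₀, g = a * b⁻¹)
    (hD1 : (1 : G₂) ∈ D) (hDm : ∀ a ∈ D, ∀ b ∈ D, a * b ∈ D)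
    (hq₂ : ∀ g : G₂, ∃ a ∈ D, ∃ b ∈ D, g = a * b⁻¹)
    (hDnt : D ≠ {1})
    (hH₀ng : ∃ a ∈ H₀, a⁻¹ ∉ H₀)
    (H : Set (G₁ × G₂))
    (hH : H = {x : G₁ × G₂ | x.1 ∈ H₀ ∧ x.2 ∈ D ∧ (x.1⁻¹ ∈ H₀ → x.2 = 1)}) :
    -- θ maps H into H₀
    (∀ u ∈ H, u.1 ∈ H₀) ∧
    -- (T1): H₀ = θ(H)·H₀^×
    (∀ a ∈ H₀, ∃ u ∈ H, ∃ ε ∈ H₀, ε⁻¹ ∈ H₀ ∧ a = u.1 * ε) ∧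
    -- (T1): θ⁻¹(H₀^×) = H^×
    (∀ u ∈ H, (u.1⁻¹ ∈ H₀ ↔ u⁻¹ ∈ H)) ∧
    -- (T2)
    (∀ u ∈ H, ∀ b ∈ H₀, ∀ c ∈ H₀, u.1 = b * c →
      ∃ v ∈ H, ∃ w ∈ H, u = v * w ∧
        (∃ ε ∈ H₀, ε⁻¹ ∈ H₀ ∧ v.1 = b * ε) ∧
        (∃ ε ∈ H₀, ε⁻¹ ∈ H₀ ∧ w.1 = c * ε)) := by
  subst hH
  refine ⟨fun u hu => hu.1, ?_, ?_, ?_⟩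
  · intro a ha
    exact ⟨(a, 1), ⟨ha, hD1, fun _ => rfl⟩, 1, h₀1, by simpa using h₀1, by simp⟩
  · intro u hu
    constructor
    · intro hinv
      refine ⟨hinv, ?_, fun _ => ?_⟩
      · simpa [hu.2.2 hinv] using hD1
      · simp [hu.2.2 hinv]
    · intro hinv
      exact hinv.1
  · intro u hu b hb c hc huv
    by_cases hbi : b⁻¹ ∈ H₀
    · by_cases hci : c⁻¹ ∈ H₀
      · have hui : u.1⁻¹ ∈ H₀ := by
          have := h₀m _ hbi _ hci
          simpa [huv, mul_comm] using this
        have hu2 : u.2 = 1 := hu.2.2 hui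
        refine ⟨(b, 1), ⟨hb, hD1, fun _ => rfl⟩, (c, 1), ⟨hc, hD1, fun _ => rfl⟩,
          ?_, ⟨1, h₀1, by simpa using h₀1, by simp⟩, ⟨1, h₀1, by simpa using h₀1, by simp⟩⟩
        exact Prod.ext (by simpa using huv) (by simpa using hu2)
      · refine ⟨(b, 1), ⟨hb, hD1, fun _ => rfl⟩, (c, u.2), ⟨hc, hu.2.1, fun h => absurd h hci⟩,
          ?_, ⟨1, h₀1, by simpa using h₀1, by simp⟩, ⟨1, h₀1, by simpa using h₀1, by simp⟩⟩
        exact Prod.ext (by simpa using huv) (by simp)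
    · refine ⟨(b, u.2), ⟨hb, hu.2.1, fun h => absurd h hbi⟩, (c, 1), ⟨hc, hD1, fun _ => rfl⟩,
        ?_, ⟨1, h₀1, by simpa using h₀1, by simp⟩, ⟨1, h₀1, by simpa using h₀1, by simp⟩⟩
      exact Prod.ext (by simpa using huv) (by simp)
end

section
/- Let H = H_0 ⋉ D with H_0 atomic, D a group (≠{1}), and H_0 not a group. If u ∈ A(H_0) is a prime element and d ∈ D, then ω(H,(u,d)) = 2; if u is not prime then ω(H,(u,d)) = ω(H_0,u). In particular ω(H) = max{2, ω(H_0)}. -/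
section
variable {γ : Type*} [CommGroup γ]

/-- Divisibility within a submonoid-set `S` of a group. -/
def DvdIn (S : Set γ) (a b : γ) : Prop := ∃ c ∈ S, b = a * c

/-- `u` is an atom of the submonoid-set `S`: a non-unit that does not factor into two
non-units of `S`. (A unit of `S` is an element `a ∈ S` with `a⁻¹ ∈ S`.) -/
def IsAtomIn (S : Set γ) (u : γ) : Prop :=
  u ∈ S ∧ u⁻¹ ∉ S ∧ ∀ a ∈ S, ∀ b ∈ S, u = a * b → a⁻¹ ∈ S ∨ b⁻¹ ∈ S

/-- `u` is a prime element of the submonoid-set `S`. -/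
def IsPrimeIn (S : Set γ) (u : γ) : Prop :=
  u ∈ S ∧ u⁻¹ ∉ S ∧ ∀ a ∈ S, ∀ b ∈ S, DvdIn S u (a * b) → DvdIn S u a ∨ DvdIn S u b

/-- `ω(S, u) ≤ N`: whenever `u` divides (in `S`) a product of atoms of `S`, it divides a
subproduct of at most `N` of them. -/
def OmegaLe (S : Set γ) (u : γ) (N : ℕ) : Prop :=
  ∀ (n : ℕ) (v : Fin n → γ), (∀ i, IsAtomIn S (v i)) → DvdIn S u (∏ i, v i) →
    ∃ t : Finset (Fin n), t.card ≤ N ∧ DvdIn S u (∏ i ∈ t, v i)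

end

section Aux

variable {G₁ G₂ : Type*} [CommGroup G₁] [CommGroup G₂] {H₀ : Set G₁}

abbrev HS (G₂ : Type*) [CommGroup G₂] (H₀ : Set G₁) : Set (G₁ × G₂) :=
  {x : G₁ × G₂ | x.1 ∈ H₀ ∧ (x.1⁻¹ ∈ H₀ → x.2 = 1)}

lemma prodMem (h₀1 : (1:G₁) ∈ H₀) (h₀m : ∀ a ∈ H₀, ∀ b ∈ H₀, a * b ∈ H₀)
    {ι : Type*} (t : Finset ι) (w : ι → G₁) (hw : ∀ i ∈ t, w i ∈ H₀) :
    ∏ i ∈ t, w i ∈ H₀ :=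
  Finset.prod_induction w (· ∈ H₀) (fun a b ha hb => h₀m a ha b hb) h₀1 hw

lemma notDvdOne' {u : G₁} (hu : u⁻¹ ∉ H₀) : ¬ DvdIn H₀ u 1 := by
  rintro ⟨c, hc, h⟩
  exact hu (by rw [inv_eq_of_mul_eq_one_right h.symm]; exact hc)

lemma omegaMono {γ : Type*} [CommGroup γ] {S : Set γ} {u : γ} {M N : ℕ}
    (h : OmegaLe S u M) (hMN : M ≤ N) : OmegaLe S u N := fun n v hv hd =>
  let ⟨t, ht, htd⟩ := h n v hv hd; ⟨t, ht.trans hMN, htd⟩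

lemma fstProd {ι : Type*} (t : Finset ι) (v : ι → G₁ × G₂) :
    (∏ i ∈ t, v i).1 = ∏ i ∈ t, (v i).1 :=
  map_prod (MonoidHom.fst G₁ G₂) v t

lemma noUnitProd (h₀1 : (1:G₁) ∈ H₀) (h₀m : ∀ a ∈ H₀, ∀ b ∈ H₀, a * b ∈ H₀)
    {u : G₁} (hu : IsAtomIn H₀ u) {ι : Type*} [DecidableEq ι]
    (t : Finset ι) (w : ι → G₁) (hw : ∀ i ∈ t, IsAtomIn H₀ (w i)) (h2 : 2 ≤ t.card)
    {c : G₁} (hc : c ∈ H₀) (hc' : c⁻¹ ∈ H₀) (he : u * c = ∏ i ∈ t, w i) : False := by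
  obtain ⟨i, hi, j, hj, hij⟩ := Finset.one_lt_card.mp h2
  have hjt : j ∈ t.erase i := Finset.mem_erase.mpr ⟨fun h => hij h.symm, hj⟩
  have e1 : ∏ k ∈ t, w k = w i * ∏ k ∈ t.erase i, w k := (Finset.mul_prod_erase t w hi).symm
  have e2 : ∏ k ∈ t.erase i, w k = w j * ∏ k ∈ (t.erase i).erase j, w k :=
    (Finset.mul_prod_erase _ w hjt).symm
  set R := ∏ k ∈ (t.erase i).erase j, w k with hR
  have hRmem : R ∈ H₀ := prodMem h₀1 h₀m _ _
    (fun k hk => (hw k (Finset.mem_of_mem_erase (Finset.mem_of_mem_erase hk))).1)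
  have he2 : u = w i * (w j * (R * c⁻¹)) := by
    have h3 : u * c = w i * (w j * R) := by rw [he, e1, e2]
    calc u = u * c * c⁻¹ := by group
    _ = w i * (w j * R) * c⁻¹ := by rw [h3]
    _ = w i * (w j * (R * c⁻¹)) := by group
  have hbmem : w j * (R * c⁻¹) ∈ H₀ := h₀m _ (hw j hj).1 _ (h₀m _ hRmem _ hc')
  rcases hu.2.2 _ (hw i hi).1 _ hbmem he2 with h | h
  · exact (hw i hi).2.1 h
  · have hwj : (w j)⁻¹ = (R * c⁻¹) * (w j * (R * c⁻¹))⁻¹ := by group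
    exact (hw j hj).2.1 (hwj ▸ h₀m _ (h₀m _ hRmem _ hc') _ h)

lemma atomPair {u : G₁} (hu : IsAtomIn H₀ u) (e : G₂) :
    IsAtomIn (HS G₂ H₀) (u, e) := by
  refine ⟨⟨hu.1, fun h => absurd h hu.2.1⟩, ?_, ?_⟩
  · rintro ⟨h1, -⟩
    exact hu.2.1 h1
  · rintro ⟨a, f⟩ ⟨ha, haf⟩ ⟨b, g⟩ ⟨hb, hbg⟩ hab
    rw [Prod.ext_iff] at hab
    rcases hu.2.2 a ha b hb hab.1 with h | h
    · exact Or.inl ⟨h, fun _ => by simp [show f = 1 from haf h]⟩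
    · exact Or.inr ⟨h, fun _ => by simp [show g = 1 from hbg h]⟩

lemma atomFst {x : G₁ × G₂} (hx : IsAtomIn (HS G₂ H₀) x) : IsAtomIn H₀ x.1 := by
  obtain ⟨⟨hm, hcond⟩, hninv, hdec⟩ := hx
  have hninv1 : x.1⁻¹ ∉ H₀ := by
    intro h
    exact hninv ⟨h, fun _ => by simp [show x.2 = 1 from hcond h]⟩
  refine ⟨hm, hninv1, ?_⟩
  intro a ha b hb hab
  by_cases hA : a⁻¹ ∈ H₀
  · exact Or.inl hA
  by_cases hB : b⁻¹ ∈ H₀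
  · exact Or.inr hB
  have h1 : x = (a, x.2) * (b, 1) := by
    rw [Prod.ext_iff]
    exact ⟨hab, by simp⟩
  rcases hdec (a, x.2) ⟨ha, fun h => absurd h hA⟩ (b, 1) ⟨hb, fun _ => rfl⟩ h1 with h | h
  · exact absurd h.1 hA
  · exact absurd h.1 hB

lemma primeDvdProd (h₀1 : (1:G₁) ∈ H₀) (h₀m : ∀ a ∈ H₀, ∀ b ∈ H₀, a * b ∈ H₀)
    {u : G₁} (hp : IsPrimeIn H₀ u) {ι : Type*} [DecidableEq ι]
    (t : Finset ι) (w : ι → G₁) (hw : ∀ i ∈ t, w i ∈ H₀)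
    (hd : DvdIn H₀ u (∏ i ∈ t, w i)) : ∃ i ∈ t, DvdIn H₀ u (w i) := by
  induction t using Finset.induction_on with
  | empty =>
    rw [Finset.prod_empty] at hd
    exact absurd hd (notDvdOne' hp.2.1)
  | @insert a s ha ih =>
    rw [Finset.prod_insert ha] at hd
    rcases hp.2.2 (w a) (hw a (Finset.mem_insert_self a s)) (∏ i ∈ s, w i)
        (prodMem h₀1 h₀m _ _ fun i hi => hw i (Finset.mem_insert_of_mem hi)) hd with h | h
    · exact ⟨a, Finset.mem_insert_self a s, h⟩
    · obtain ⟨i, hi, hdi⟩ := ih (fun i hi => hw i (Finset.mem_insert_of_mem hi)) h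
      exact ⟨i, Finset.mem_insert_of_mem hi, hdi⟩

lemma primeOmegaOne (h₀1 : (1:G₁) ∈ H₀) (h₀m : ∀ a ∈ H₀, ∀ b ∈ H₀, a * b ∈ H₀)
    {u : G₁} (hp : IsPrimeIn H₀ u) : OmegaLe H₀ u 1 := by
  intro n v hv hd
  obtain ⟨i, -, hi⟩ := primeDvdProd h₀1 h₀m hp Finset.univ v (fun i _ => (hv i).1) hd
  exact ⟨{i}, by simp, by simpa using hi⟩

lemma omegaOnePrime (h₀1 : (1:G₁) ∈ H₀) (h₀m : ∀ a ∈ H₀, ∀ b ∈ H₀, a * b ∈ H₀)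
    (hatomic : ∀ a ∈ H₀, a⁻¹ ∉ H₀ →
      ∃ (n : ℕ) (v : Fin n → G₁), (∀ i, IsAtomIn H₀ (v i)) ∧ a = ∏ i, v i)
    {u : G₁} (hu : IsAtomIn H₀ u) (h1 : OmegaLe H₀ u 1) : IsPrimeIn H₀ u := by
  refine ⟨hu.1, hu.2.1, ?_⟩
  intro a ha b hb hd
  by_cases hA : a⁻¹ ∈ H₀
  · right
    obtain ⟨c, hc, hce⟩ := hd
    refine ⟨a⁻¹ * c, h₀m _ hA _ hc, ?_⟩
    calc b = a⁻¹ * (a * b) := (inv_mul_cancel_left a b).symm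
    _ = a⁻¹ * (u * c) := by rw [hce]
    _ = u * (a⁻¹ * c) := mul_left_comm a⁻¹ u c
  by_cases hB : b⁻¹ ∈ H₀
  · left
    obtain ⟨c, hc, hce⟩ := hd
    refine ⟨b⁻¹ * c, h₀m _ hB _ hc, ?_⟩
    calc a = b⁻¹ * (a * b) := by rw [mul_comm a b, inv_mul_cancel_left]
    _ = b⁻¹ * (u * c) := by rw [hce]
    _ = u * (b⁻¹ * c) := mul_left_comm b⁻¹ u c
  obtain ⟨m, v, hv, hva⟩ := hatomic a ha hA
  obtain ⟨k, w, hw, hwb⟩ := hatomic b hb hB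
  have hfa : ∀ i, IsAtomIn H₀ (Fin.append v w i) := by
    intro i
    refine Fin.addCases (motive := fun i => IsAtomIn H₀ (Fin.append v w i)) ?_ ?_ i
    · intro j; rw [Fin.append_left]; exact hv j
    · intro j; rw [Fin.append_right]; exact hw j
  have hprod : ∏ i, Fin.append v w i = a * b := by
    rw [Fin.prod_univ_add, hva, hwb]
    congr 1
    · exact Finset.prod_congr rfl fun j _ => Fin.append_left v w j
    · exact Finset.prod_congr rfl fun j _ => Fin.append_right v w j
  obtain ⟨t, htc, htd⟩ := h1 (m + k) (Fin.append v w) hfa (by rw [hprod]; exact hd)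
  rcases Finset.eq_empty_or_nonempty t with rfl | ⟨i, hi⟩
  · rw [Finset.prod_empty] at htd
    exact absurd htd (notDvdOne' hu.2.1)
  · have ht : t = {i} := by
      apply Finset.eq_singleton_iff_unique_mem.mpr
      exact ⟨hi, fun x hx => Finset.card_le_one.mp htc x hx i hi⟩
    rw [ht, Finset.prod_singleton] at htd
    refine Fin.addCases
      (motive := fun i => DvdIn H₀ u (Fin.append v w i) → DvdIn H₀ u a ∨ DvdIn H₀ u b)
      ?_ ?_ i htd
    · intro j hj
      rw [Fin.append_left] at hj
      left
      obtain ⟨c, hc, hce⟩ := hj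
      refine ⟨c * ∏ x ∈ Finset.univ.erase j, v x,
        h₀m _ hc _ (prodMem h₀1 h₀m _ _ fun x _ => (hv x).1), ?_⟩
      rw [hva, ← Finset.mul_prod_erase Finset.univ v (Finset.mem_univ j), hce, mul_assoc]
    · intro j hj
      rw [Fin.append_right] at hj
      right
      obtain ⟨c, hc, hce⟩ := hj
      refine ⟨c * ∏ x ∈ Finset.univ.erase j, w x,
        h₀m _ hc _ (prodMem h₀1 h₀m _ _ fun x _ => (hw x).1), ?_⟩
      rw [hwb, ← Finset.mul_prod_erase Finset.univ w (Finset.mem_univ j), hce, mul_assoc]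

lemma keyLe (h₀1 : (1:G₁) ∈ H₀) (h₀m : ∀ a ∈ H₀, ∀ b ∈ H₀, a * b ∈ H₀)
    {u : G₁} (hu : IsAtomIn H₀ u) (d : G₂) {N : ℕ} (hN : 2 ≤ N)
    (h : OmegaLe H₀ u N) : OmegaLe (HS G₂ H₀) (u, d) N := by
  intro n v hv hdvd
  have hv1 : ∀ i, IsAtomIn H₀ (v i).1 := fun i => atomFst (hv i)
  obtain ⟨⟨c, f⟩, hcf, hce⟩ := hdvd
  have hc : c ∈ H₀ := hcf.1
  have h1 : ∏ i, (v i).1 = u * c := by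
    have := congrArg Prod.fst hce
    rw [fstProd] at this
    exact this
  obtain ⟨t, htc, c', hc', he'⟩ := h n (fun i => (v i).1) hv1 ⟨c, hc, h1⟩
  by_cases hcu : c'⁻¹ ∈ H₀
  · rcases Nat.lt_or_ge t.card 2 with hlt | hge
    · have h01 : t.card = 0 ∨ t.card = 1 := by omega
      rcases h01 with h0 | hone
      · rw [Finset.card_eq_zero.mp h0, Finset.prod_empty] at he'
        exact absurd (by rw [inv_eq_of_mul_eq_one_right he'.symm]; exact hc') hu.2.1
      · obtain ⟨i, rfl⟩ := Finset.card_eq_one.mp hone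
        rw [Finset.prod_singleton] at he'
        by_cases hd2 : (v i).2 = d
        · refine ⟨{i}, by rw [Finset.card_singleton]; omega, (c', 1), ⟨hc', fun _ => rfl⟩, ?_⟩
          rw [Finset.prod_singleton, Prod.ext_iff]
          exact ⟨he', by rw [hd2]; simp⟩
        · rcases Nat.lt_or_ge n 2 with hn2 | hn2
          · -- n = 1, contradiction with hd2
            exfalso
            have hn1 : n = 1 := by have := i.isLt; omega
            subst hn1
            have h0 : i = 0 := Subsingleton.elim i 0
            have hfull : v 0 = (u, d) * (c, f) := by
              rw [← Fin.prod_univ_one v]; exact hce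
            have hc1 : (v 0).1 = u * c := congrArg Prod.fst hfull
            have hcc : c = c' := mul_left_cancel (hc1.symm.trans (h0 ▸ he'))
            have hf1 : f = 1 := hcf.2 (by rw [hcc]; exact hcu)
            have hsnd : (v 0).2 = d * f := congrArg Prod.snd hfull
            exact hd2 (by rw [h0, hsnd, hf1, mul_one])
          · have : Nontrivial (Fin n) := Fin.nontrivial_iff_two_le.mpr hn2
            obtain ⟨j, hj⟩ := exists_ne i
            refine ⟨{i, j}, ?_, (c' * (v j).1, d⁻¹ * ((v i).2 * (v j).2)),
              ⟨h₀m _ hc' _ (hv1 j).1, fun hz => ?_⟩, ?_⟩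
            · rw [Finset.card_pair hj.symm]
              exact hN
            · exfalso
              have hwj : ((v j).1)⁻¹ = c' * (c' * (v j).1)⁻¹ := by rw [mul_inv, mul_inv_cancel_left]
              exact (hv1 j).2.1 (hwj ▸ h₀m _ hc' _ hz)
            · rw [Finset.prod_pair hj.symm, Prod.ext_iff]
              constructor
              · show (v i).1 * (v j).1 = u * (c' * (v j).1)
                rw [he', mul_assoc]
              · show (v i).2 * (v j).2 = d * (d⁻¹ * ((v i).2 * (v j).2))
                group
    · exact absurd he' (fun he'' => noUnitProd h₀1 h₀m hu t _ (fun i _ => hv1 i) hge hc' hcu he''.symm)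
  · refine ⟨t, htc, (c', d⁻¹ * (∏ i ∈ t, v i).2), ⟨hc', fun hh => absurd hh hcu⟩, ?_⟩
    rw [Prod.ext_iff]
    constructor
    · show (∏ i ∈ t, v i).1 = u * c'
      rw [fstProd]; exact he'
    · show (∏ i ∈ t, v i).2 = d * (d⁻¹ * (∏ i ∈ t, v i).2)
      group

lemma liftDown (h₀1 : (1:G₁) ∈ H₀) (h₀m : ∀ a ∈ H₀, ∀ b ∈ H₀, a * b ∈ H₀)
    {u : G₁} (hu : IsAtomIn H₀ u) (d : G₂) {N : ℕ}
    (h : OmegaLe (HS G₂ H₀) (u, d) N) : OmegaLe H₀ u N := by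
  have hN1 : 1 ≤ N := by
    obtain ⟨t, htc, ⟨c, f⟩, hcf, hce⟩ := h 1 (fun _ => (u, d)) (fun _ => atomPair hu d)
      ⟨(1, 1), ⟨h₀1, fun _ => rfl⟩, by simp⟩
    rcases Finset.eq_empty_or_nonempty t with rfl | ⟨i, hi⟩
    · rw [Finset.prod_empty] at hce
      have h1 : (1 : G₁) = u * c := congrArg Prod.fst hce
      exact absurd (by rw [inv_eq_of_mul_eq_one_right h1.symm]; exact hcf.1) hu.2.1
    · exact le_trans (Finset.card_pos.mpr ⟨i, hi⟩) htc
  intro n w hw hd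
  obtain ⟨c, hc, hce⟩ := hd
  by_cases hcu : c⁻¹ ∈ H₀
  · rcases Nat.lt_or_ge n 2 with hlt | hge
    · have h01 : n = 0 ∨ n = 1 := by omega
      rcases h01 with rfl | rfl
      · rw [Fin.prod_univ_zero] at hce
        exact absurd (by rw [inv_eq_of_mul_eq_one_right hce.symm]; exact hc) hu.2.1
      · exact ⟨Finset.univ, by simpa using hN1, c, hc, hce⟩
    · exact absurd hce (fun he => (noUnitProd h₀1 h₀m hu Finset.univ w
        (fun i _ => hw i) (by simpa using hge) hc hcu he.symm))
  · obtain ⟨t, htc, ⟨c₂, f₂⟩, hcf₂, hce₂⟩ := h n (fun i => (w i, 1))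
      (fun i => atomPair (hw i) 1)
      ⟨(c, d⁻¹), ⟨hc, fun hh => absurd hh hcu⟩, by
        rw [Prod.ext_iff]
        constructor
        · show (∏ i, ((w i, 1) : G₁ × G₂)).1 = u * c
          rw [fstProd]; exact hce
        · show (∏ i, ((w i, 1) : G₁ × G₂)).2 = d * d⁻¹
          have h2 : (∏ i, ((w i, 1) : G₁ × G₂)).2 = ∏ _i : Fin n, (1 : G₂) :=
            map_prod (MonoidHom.snd G₁ G₂) _ _
          rw [h2]
          simp⟩
    refine ⟨t, htc, c₂, hcf₂.1, ?_⟩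
    have := congrArg Prod.fst hce₂
    rw [fstProd] at this
    simpa using this

lemma lowerTwo [Nontrivial G₂] (h₀1 : (1:G₁) ∈ H₀)
    {u : G₁} (hu : IsAtomIn H₀ u) (d : G₂) :
    ¬ OmegaLe (HS G₂ H₀) (u, d) 1 := by
  obtain ⟨e, he⟩ := exists_ne d
  intro h
  obtain ⟨t, htc, ⟨c, f⟩, hcf, hce⟩ := h 2 (fun _ => (u, e)) (fun _ => atomPair hu e)
    ⟨(u, d⁻¹ * (e * e)), ⟨hu.1, fun hh => absurd hh hu.2.1⟩, by
      rw [Fin.prod_univ_two, Prod.ext_iff]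
      constructor
      · show u * u = u * u
        rfl
      · show e * e = d * (d⁻¹ * (e * e))
        rw [mul_inv_cancel_left]⟩
  rcases Finset.eq_empty_or_nonempty t with rfl | ⟨i, hi⟩
  · rw [Finset.prod_empty] at hce
    have h1 : (1 : G₁) = u * c := congrArg Prod.fst hce
    exact absurd (by rw [inv_eq_of_mul_eq_one_right h1.symm]; exact hcf.1) hu.2.1
  · have ht : t = {i} := Finset.eq_singleton_iff_unique_mem.mpr
      ⟨hi, fun x hx => Finset.card_le_one.mp htc x hx i hi⟩
    rw [ht, Finset.prod_singleton] at hce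
    have h1 : u = u * c := congrArg Prod.fst hce
    have hc1 : c = 1 := mul_left_cancel (a := u) (by rw [mul_one, ← h1])
    have hf1 : f = 1 := hcf.2 (by rw [hc1, inv_one]; exact h₀1)
    have h2 : e = d * f := congrArg Prod.snd hce
    exact he (by rw [h2, hf1, mul_one])

end Aux

/- `H = H₀ ⋉ D` with `H₀` atomic (modelled as a subset of its quotient group `G₁`), not a
group, and `D` a nontrivial group `G₂`. Then for an atom `u` of `H₀` and `d ∈ D`:
if `u` is prime then `ω(H,(u,d)) = 2`; if `u` is not prime then `ω(H,(u,d)) = ω(H₀,u)`.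
In particular `ω(H) = max {2, ω(H₀)}`. -/
theorem stmt14 {G₁ G₂ : Type*} [CommGroup G₁] [CommGroup G₂] [Nontrivial G₂]
    (H₀ : Set G₁)
    (h₀1 : (1 : G₁) ∈ H₀) (h₀m : ∀ a ∈ H₀, ∀ b ∈ H₀, a * b ∈ H₀)
    (hq₁ : ∀ g : G₁, ∃ a ∈ H₀, ∃ b ∈ H₀, g = a * b⁻¹)
    (hH₀ng : ∃ a ∈ H₀, a⁻¹ ∉ H₀)
    (hatomic : ∀ a ∈ H₀, a⁻¹ ∉ H₀ →
      ∃ (n : ℕ) (v : Fin n → G₁), (∀ i, IsAtomIn H₀ (v i)) ∧ a = ∏ i, v i)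
    (H : Set (G₁ × G₂))
    (hH : H = {x : G₁ × G₂ | x.1 ∈ H₀ ∧ (x.1⁻¹ ∈ H₀ → x.2 = 1)}) :
    (∀ (u : G₁) (d : G₂), IsAtomIn H₀ u → IsPrimeIn H₀ u →
      OmegaLe H (u, d) 2 ∧ ¬ OmegaLe H (u, d) 1) ∧
    (∀ (u : G₁) (d : G₂), IsAtomIn H₀ u → ¬ IsPrimeIn H₀ u →
      ∀ N : ℕ, OmegaLe H (u, d) N ↔ OmegaLe H₀ u N) ∧
    (∀ N : ℕ, (∀ w : G₁ × G₂, IsAtomIn H w → OmegaLe H w N) ↔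
      (2 ≤ N ∧ ∀ u : G₁, IsAtomIn H₀ u → OmegaLe H₀ u N)) := by
  subst hH
  refine ⟨?_, ?_, ?_⟩
  · intro u d hu hp
    exact ⟨keyLe h₀1 h₀m hu d le_rfl (omegaMono (primeOmegaOne h₀1 h₀m hp) one_le_two),
      lowerTwo h₀1 hu d⟩
  · intro u d hu hnp N
    constructor
    · exact fun h => liftDown h₀1 h₀m hu d h
    · intro h
      have hn1 : ¬ OmegaLe H₀ u 1 := fun h1 => hnp (omegaOnePrime h₀1 h₀m hatomic hu h1)
      have hN2 : 2 ≤ N := by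
        by_contra hlt
        exact hn1 (omegaMono h (by omega))
      exact keyLe h₀1 h₀m hu d hN2 h
  · intro N
    constructor
    · intro hall
      obtain ⟨a, ha, hani⟩ := hH₀ng
      obtain ⟨n, v, hv, hva⟩ := hatomic a ha hani
      have hn : 0 < n := by
        rcases Nat.eq_zero_or_pos n with rfl | h
        · rw [Fin.prod_univ_zero] at hva
          exact absurd (show a⁻¹ ∈ H₀ by rw [hva, inv_one]; exact h₀1) hani
        · exact h
      have hu0 : IsAtomIn H₀ (v ⟨0, hn⟩) := hv _
      have h2 : 2 ≤ N := by
        by_contra hlt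
        exact lowerTwo h₀1 hu0 (1 : G₂)
          (omegaMono (hall (v ⟨0, hn⟩, 1) (atomPair hu0 1)) (by omega))
      exact ⟨h2, fun u hu => liftDown h₀1 h₀m hu 1 (hall (u, 1) (atomPair hu 1))⟩
    · rintro ⟨hN, hall⟩ w hw
      have hu := atomFst hw
      have hkey := keyLe h₀1 h₀m hu w.2 hN (hall w.1 hu)
      simpa using hkey
end

section
/- Let n ≥ 2, let e_1,…,e_{n−1} be independent elements of infinite order in an abelian group G, let A_i, B_i ∈ ℕ with gcd(A_i,B_i) = 1, and let G_0 = {A_i e_i : i ∈ [1,n−1]} ∪ {−Σ_{i=1}^{n−1} B_i e_i}. Then the zero-sum monoid B(G_0) has exactly one atom U = Π_{i=1}^{n−1} (A_i e_i)^{B_i L / A_i} · (−Σ B_i e_i)^L where L = lcm{A_i : i ∈ [1,n−1]}, and B(G_0) is factorial. -/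
set_option linter.unusedSectionVars false
set_option maxHeartbeats 1000000

section Aux
variable {ι G : Type*} [DecidableEq ι] [DecidableEq G] [Fintype ι] {f : ι → G} {g : G}

lemma myT_count_f (hinj : Function.Injective f) (hfg : ∀ i, f i ≠ g)
    (c : ι → ℕ) (k : ℕ) (j : ι) :
    ((∑ i, Multiset.replicate (c i) (f i)) + Multiset.replicate k g).count (f j) = c j := by
  simp only [Multiset.count_add, Multiset.count_sum', Multiset.count_replicate,
    (hfg j).symm, if_false, add_zero]
  have : ∀ x : ι, (if f x = f j then c x else 0) = if x = j then c x else 0 := by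
    intro x
    by_cases h : x = j
    · subst h; simp
    · rw [if_neg h, if_neg (fun h' => h (hinj h'))]
  rw [Finset.sum_congr rfl (fun x _ => this x)]
  simp

lemma myT_count_g (hfg : ∀ i, f i ≠ g) (c : ι → ℕ) (k : ℕ) :
    ((∑ i, Multiset.replicate (c i) (f i)) + Multiset.replicate k g).count g = k := by
  simp [Multiset.count_sum', Multiset.count_replicate, fun i => hfg i]

lemma myT_mem {c : ι → ℕ} {k : ℕ} {x : G}
    (hx : x ∈ (∑ i, Multiset.replicate (c i) (f i)) + Multiset.replicate k g) :
    (∃ i, x = f i) ∨ x = g := by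
  rcases Multiset.mem_add.1 hx with h | h
  · rcases Multiset.mem_sum.1 h with ⟨i, -, hi⟩
    exact Or.inl ⟨i, Multiset.eq_of_mem_replicate hi⟩
  · exact Or.inr (Multiset.eq_of_mem_replicate h)

lemma myT_decomp (hinj : Function.Injective f) (hfg : ∀ i, f i ≠ g) (S : Multiset G)
    (hS : ∀ x ∈ S, (∃ i, x = f i) ∨ x = g) :
    S = (∑ i, Multiset.replicate (S.count (f i)) (f i))
        + Multiset.replicate (S.count g) g := by
  ext x
  by_cases hx : x = g
  · subst hx; rw [myT_count_g hfg]
  · by_cases hx2 : ∃ i, x = f i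
    · obtain ⟨i, rfl⟩ := hx2; rw [myT_count_f hinj hfg]
    · have h1 : x ∉ S := fun h => by
        rcases hS x h with h' | h' <;> [exact hx2 h'; exact hx h']
      rw [Multiset.count_eq_zero_of_notMem h1, eq_comm, Multiset.count_eq_zero]
      intro hmem
      rcases myT_mem hmem with h' | h' <;> [exact hx2 h'; exact hx h']

lemma myT_sum [AddCommMonoid G] (c : ι → ℕ) (k : ℕ) :
    ((∑ i, Multiset.replicate (c i) (f i)) + Multiset.replicate k g).sum
      = (∑ i, c i • f i) + k • g := by
  rw [Multiset.sum_add, Multiset.sum_replicate]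
  congr 1
  induction (Finset.univ : Finset ι) using Finset.cons_induction with
  | empty => simp
  | cons a s ha ih =>
    rw [Finset.sum_cons, Finset.sum_cons, Multiset.sum_add,
      Multiset.sum_replicate, ih]

end Aux

/-- A zero-sum sequence over `G₀ ⊆ G`. -/
def IsZeroSumSeqG {G : Type*} [AddCommGroup G] (G₀ : Set G) (S : Multiset G) : Prop :=
  (∀ x ∈ S, x ∈ G₀) ∧ S.sum = 0

/-- An atom: a minimal nonempty zero-sum sequence over `G₀`. -/
def IsAtomSeqG {G : Type*} [AddCommGroup G] (G₀ : Set G) (S : Multiset G) : Prop :=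
  IsZeroSumSeqG G₀ S ∧ S ≠ 0 ∧ ∀ T : Multiset G, T ≤ S → T ≠ 0 → T.sum = 0 → T = S

/-- Let `n ≥ 2`, `e₁,…,e_{n−1}` independent elements of infinite order, `A_i, B_i ∈ ℕ`
positive with `gcd(A_i, B_i) = 1`, and
`G₀ = {A_i • e_i : i} ∪ {−Σ B_i • e_i}`. Then `B(G₀)` has exactly one atom
`U = Σ_i (B_i·L/A_i) copies of A_i • e_i plus L copies of −Σ B_i • e_i` where
`L = lcm {A_i}`, and `B(G₀)` is factorial. -/
theorem stmt16 {G : Type*} [AddCommGroup G] (n : ℕ) (hn : 2 ≤ n)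
    (e : Fin (n - 1) → G)
    (hind : ∀ m : Fin (n - 1) → ℤ, (∑ i, m i • e i) = 0 → ∀ i, m i • e i = 0)
    (hord : ∀ i, ¬ IsOfFinAddOrder (e i))
    (A B : Fin (n - 1) → ℕ) (hA : ∀ i, 0 < A i) (hB : ∀ i, 0 < B i)
    (hcop : ∀ i, Nat.gcd (A i) (B i) = 1)
    (G₀ : Set G)
    (hG₀ : G₀ = {x | (∃ i, x = A i • e i) ∨ x = -(∑ i, B i • e i)})
    (L : ℕ) (hL : L = Finset.univ.lcm A)
    (U : Multiset G)
    (hU : U = (∑ i, Multiset.replicate (B i * L / A i) (A i • e i)) +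
      Multiset.replicate L (-(∑ i, B i • e i))) :
    (∀ S : Multiset G, IsAtomSeqG G₀ S ↔ S = U) ∧
    (∀ S : Multiset G, IsZeroSumSeqG G₀ S → ∃! k : ℕ, S = k • U) := by
  classical
  set g : G := -(∑ i, B i • e i) with hg
  -- coefficients of independent elements must vanish
  have hcoeff : ∀ u : Fin (n - 1) → ℤ, (∑ i, u i • e i) = 0 → ∀ i, u i = 0 := by
    intro u hu i
    by_contra hne
    refine hord i (isOfFinAddOrder_iff_nsmul_eq_zero.2
      ⟨(u i).natAbs, Int.natAbs_pos.mpr hne, ?_⟩)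
    have h1 : u i • e i = 0 := hind u hu i
    rcases Int.natAbs_eq (u i) with h | h
    · rw [← natCast_zsmul, ← h, h1]
    · rw [← natCast_zsmul, ← neg_neg (((u i).natAbs : ℤ)), ← h, neg_zsmul, h1, neg_zero]
  have hdsum : ∀ (z : ℤ) (i : Fin (n - 1)),
      (∑ j, (if j = i then z else 0) • e j) = z • e i := by
    intro z i
    have h : ∀ j, (if j = i then z else 0) • e j = if j = i then z • e j else 0 := by
      intro j; split <;> simp
    rw [Finset.sum_congr rfl fun j _ => h j]
    simp
  -- the generators are pairwise distinct
  have hinj : Function.Injective (fun i : Fin (n - 1) => A i • e i) := by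
    intro i j hij
    by_contra hne
    have hz : (∑ t, ((if t = i then (A i : ℤ) else 0) - (if t = j then (A j : ℤ) else 0)) • e t)
        = 0 := by
      simp only [sub_smul, Finset.sum_sub_distrib, hdsum]
      rw [natCast_zsmul, natCast_zsmul]
      rw [sub_eq_zero]
      exact hij
    have h := hcoeff _ hz i
    rw [if_pos rfl, if_neg hne, sub_zero] at h
    exact (hA i).ne' (by exact_mod_cast h)
  have hfg : ∀ i : Fin (n - 1), A i • e i ≠ g := by
    intro i h
    have hz : (∑ t, ((if t = i then (A i : ℤ) else 0) + (B t : ℤ)) • e t) = 0 := by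
      simp only [add_smul, Finset.sum_add_distrib, hdsum]
      rw [natCast_zsmul, Finset.sum_congr rfl (fun t _ => natCast_zsmul (e t) (B t)), h, hg]
      simp
    have h2 := hcoeff _ hz i
    rw [if_pos rfl] at h2
    have h3 : A i + B i = 0 := by exact_mod_cast h2
    have := hA i
    omega
  -- sum of a generic sequence
  have hzero : ∀ (c : Fin (n - 1) → ℕ) (k : ℕ),
      ((∑ i, c i • (A i • e i)) + k • g = 0) ↔ ∀ i, c i * A i = k * B i := by
    intro c k
    have hrep : ((∑ i, c i • (A i • e i)) + k • g)
        = ∑ i, (((c i * A i : ℕ) : ℤ) - ((k * B i : ℕ) : ℤ)) • e i := by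
      have h2 : k • g = -(∑ i, (k * B i) • e i) := by
        rw [hg, smul_neg, Finset.smul_sum]
        congr 1
        exact Finset.sum_congr rfl fun i _ => smul_smul k (B i) (e i)
      rw [Finset.sum_congr rfl (fun i _ => smul_smul (c i) (A i) (e i)), h2,
        Finset.sum_congr rfl
          (fun i _ => by rw [sub_smul, natCast_zsmul, natCast_zsmul] :
            ∀ i ∈ Finset.univ, (((c i * A i : ℕ) : ℤ) - ((k * B i : ℕ) : ℤ)) • e i
              = (c i * A i) • e i - (k * B i) • e i),
        Finset.sum_sub_distrib, sub_eq_add_neg]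
    rw [hrep]
    constructor
    · intro h i
      have := hcoeff _ h i
      exact_mod_cast sub_eq_zero.mp this
    · intro h
      refine Finset.sum_eq_zero fun i _ => ?_
      rw [h i, sub_self, zero_smul]
  -- basic facts about L and U
  have hAL : ∀ i, A i ∣ L := fun i => hL ▸ Finset.dvd_lcm (Finset.mem_univ i)
  have hLpos : 0 < L := by
    rcases Nat.eq_zero_or_pos L with h | h
    · rw [hL] at h
      obtain ⟨i, -, hi⟩ := (Set.mem_image _ _ _).mp (Finset.lcm_eq_zero_iff.mp h)
      exact absurd hi ((hA i).ne')
    · exact h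
  have hu₀ : ∀ i, (B i * L / A i) * A i = L * B i := fun i => by
    rw [Nat.div_mul_cancel ((hAL i).mul_left (B i)), mul_comm]
  have hcUg : U.count g = L := by
    rw [hU]; exact myT_count_g hfg _ _
  have hUne : U ≠ 0 := by
    intro h
    rw [h, Multiset.count_zero] at hcUg
    exact hLpos.ne' hcUg.symm
  have hUsum : U.sum = 0 := by
    rw [hU, myT_sum, hzero]
    intro i
    exact hu₀ i
  have hUmem : ∀ x ∈ U, x ∈ G₀ := by
    intro x hx
    rw [hU] at hx
    rw [hG₀]
    exact myT_mem hx
  have hUzs : IsZeroSumSeqG G₀ U := ⟨hUmem, hUsum⟩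
  -- the key decomposition: every zero-sum sequence is a multiple of U
  have hdec : ∀ S : Multiset G, (∀ x ∈ S, x ∈ G₀) → S.sum = 0 → ∃ m : ℕ, S = m • U := by
    intro S hmem hsum
    have hSd := myT_decomp hinj hfg S (fun x hx => by
      have := hmem x hx; rw [hG₀] at this; exact this)
    set c : Fin (n - 1) → ℕ := fun i => S.count (A i • e i) with hc
    set k : ℕ := S.count g with hk
    have hsum2 : ((∑ i, c i • (A i • e i)) + k • g) = 0 := by
      rw [← myT_sum, ← hSd]; exact hsum
    have hck : ∀ i, c i * A i = k * B i := (hzero c k).mp hsum2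
    have hAk : ∀ i, A i ∣ k := by
      intro i
      have h1 : A i ∣ k * B i := hck i ▸ dvd_mul_left (A i) (c i)
      exact (Nat.Coprime.dvd_of_dvd_mul_right (hcop i) h1)
    have hLk : L ∣ k := by
      rw [hL]
      exact Finset.lcm_dvd fun i _ => hAk i
    obtain ⟨m, hm⟩ := hLk
    refine ⟨m, ?_⟩
    have hcm : ∀ i, c i = m * (B i * L / A i) := by
      intro i
      have : c i * A i = (m * (B i * L / A i)) * A i := by
        have h5 : (m * (B i * L / A i)) * A i = m * (L * B i) := by
          rw [mul_assoc, hu₀ i]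
        rw [hck i, hm, h5]
        ring
      exact Nat.eq_of_mul_eq_mul_right (hA i) this
    rw [hSd, hU, smul_add, Finset.smul_sum]
    congr 1
    · refine Finset.sum_congr rfl fun i _ => ?_
      rw [Multiset.nsmul_replicate, ← hcm i]
    · rw [Multiset.nsmul_replicate, hm, Nat.mul_comm L m]
  have hcmUg : ∀ m : ℕ, (m • U).count g = m * L := by
    intro m
    rw [Multiset.count_nsmul, hcUg]
  constructor
  · intro S
    constructor
    · rintro ⟨⟨hmem, hsum⟩, hne, hmin⟩
      obtain ⟨m, hm⟩ := hdec S hmem hsum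
      have hmne : m ≠ 0 := by
        rintro rfl
        rw [zero_smul] at hm
        exact hne hm
      have hUS : U ≤ S := by
        rw [hm, Multiset.le_iff_count]
        intro x
        rw [Multiset.count_nsmul]
        exact Nat.le_mul_of_pos_left _ (Nat.pos_of_ne_zero hmne)
      exact (hmin U hUS hUne hUsum).symm
    · rintro rfl
      refine ⟨hUzs, hUne, ?_⟩
      intro W hWle hWne hWsum
      have hWmem : ∀ x ∈ W, x ∈ G₀ := fun x hx => hUmem x (Multiset.mem_of_le hWle hx)
      obtain ⟨m, hm⟩ := hdec W hWmem hWsum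
      have hmne : m ≠ 0 := by
        rintro rfl
        rw [zero_smul] at hm
        exact hWne hm
      have hle : m * L ≤ L := by
        have := Multiset.count_le_of_le g hWle
        rw [hm, hcmUg, hcUg] at this
        exact this
      have hm1 : m = 1 := by
        have h6 : m * L ≤ 1 * L := by omega
        have := Nat.le_of_mul_le_mul_right h6 hLpos
        omega
      rw [hm, hm1, one_smul]
  · intro S hS
    obtain ⟨m, hm⟩ := hdec S hS.1 hS.2
    refine ⟨m, hm, fun k hk => ?_⟩
    have : k * L = m * L := by
      rw [← hcmUg k, ← hcmUg m, ← hk, ← hm]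
    exact Nat.eq_of_mul_eq_mul_right hLpos this
end

section
/- Let Ω be a finite set containing 0, c ∈ ℚ_{>0}^Ω with c_0 = 1, Λ a set of pairwise disjoint subsets of Ω∖{0} each of size ≥ 2 with ⋃Λ = Ω∖{0} and C_I := Σ_{i∈I} c_i ∈ ℕ for all I ∈ Λ. Let H = {x ∈ ℕ_0^Ω : Σ_{i∈I} x_i = C_I · x_0 for all I ∈ Λ}. Then the map ℓ: H → ℕ_0, x ↦ x_0, is a transfer homomorphism; in particular x ∈ H is an atom iff x_0 = 1, and H is half-factorial. -/
private lemma finsetSplit17 {Ω : Type*} [DecidableEq Ω] (I : Finset Ω) :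
    ∀ (x : Ω → ℕ) (m : ℕ), m ≤ ∑ i ∈ I, x i →
      ∃ y : Ω → ℕ, (∀ i, y i ≤ x i) ∧ (∀ i, i ∉ I → y i = 0) ∧ ∑ i ∈ I, y i = m := by
  induction I using Finset.induction_on with
  | empty =>
      intro x m hm
      simp only [Finset.sum_empty, Nat.le_zero] at hm
      exact ⟨0, by simp, by simp, by simp [hm]⟩
  | @insert a I ha ih =>
      intro x m hm
      rw [Finset.sum_insert ha] at hm
      have h1 : m - min m (x a) ≤ ∑ i ∈ I, x i := by omega
      obtain ⟨y, hy1, hy2, hy3⟩ := ih x (m - min m (x a)) h1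
      refine ⟨Function.update y a (min m (x a)), ?_, ?_, ?_⟩
      · intro i
        rcases eq_or_ne i a with rfl | h
        · rw [Function.update_self]; omega
        · simp [Function.update_of_ne h, hy1 i]
      · intro i hi
        simp only [Finset.mem_insert, not_or] at hi
        simp [Function.update_of_ne hi.1, hy2 i hi.2]
      · rw [Finset.sum_insert ha, Function.update_self]
        have : ∑ i ∈ I, Function.update y a (min m (x a)) i = ∑ i ∈ I, y i := by
          apply Finset.sum_congr rfl
          intro i hi
          exact Function.update_of_ne (fun h : i = a => ha (h ▸ hi)) _ _
        rw [this, hy3]; omega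

/-- `x` is an atom of the additive submonoid-set `H` of `Ω → ℕ`. -/
def IsAtomPi {Ω : Type*} (H : Set (Ω → ℕ)) (x : Ω → ℕ) : Prop :=
  x ∈ H ∧ x ≠ 0 ∧ ∀ y ∈ H, ∀ w ∈ H, x = y + w → y = 0 ∨ w = 0

/-- Let `Ω` be finite with distinguished element `z` ("0"), `c ∈ ℚ_{>0}^Ω` with `c z = 1`,
`Λ` a set of pairwise disjoint subsets of `Ω ∖ {z}` of size `≥ 2` covering `Ω ∖ {z}`, and
`C I = Σ_{i∈I} c i ∈ ℕ`. Let `H = {x ∈ ℕ₀^Ω : Σ_{i∈I} x i = C I · x z for all I ∈ Λ}`.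
Then `ℓ : H → ℕ₀, x ↦ x z` is a transfer homomorphism; in particular `x ∈ H` is an atom
iff `x z = 1`, and `H` is half-factorial. -/
theorem stmt17 {Ω : Type*} [Fintype Ω] [DecidableEq Ω] (z : Ω)
    (c : Ω → ℚ) (hc : ∀ i, 0 < c i) (hcz : c z = 1)
    (Λ : Finset (Finset Ω))
    (hdisj : ∀ I ∈ Λ, ∀ J ∈ Λ, I ≠ J → Disjoint I J)
    (hsize : ∀ I ∈ Λ, 2 ≤ I.card)
    (hzI : ∀ I ∈ Λ, z ∉ I)
    (hcover : ∀ i : Ω, i ≠ z → ∃ I ∈ Λ, i ∈ I)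
    (C : Finset Ω → ℕ) (hC : ∀ I ∈ Λ, (C I : ℚ) = ∑ i ∈ I, c i)
    (H : Set (Ω → ℕ))
    (hH : H = {x : Ω → ℕ | ∀ I ∈ Λ, ∑ i ∈ I, x i = C I * x z}) :
    -- (T1): ℓ is surjective onto ℕ₀
    (∀ n : ℕ, ∃ x ∈ H, x z = n) ∧
    -- (T1): ℓ⁻¹(0) = {0}, i.e. ℓ⁻¹(units) = units
    (∀ x ∈ H, (x z = 0 ↔ x = 0)) ∧
    -- (T2): splittings of ℓ(x) lift to splittings of x
    (∀ x ∈ H, ∀ k l : ℕ, x z = k + l →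
      ∃ y ∈ H, ∃ w ∈ H, x = y + w ∧ y z = k ∧ w z = l) ∧
    -- atoms are exactly the elements with ℓ(x) = 1
    (∀ x ∈ H, (IsAtomPi H x ↔ x z = 1)) ∧
    -- H is half-factorial
    (∀ x ∈ H, ∀ f gfac : Multiset (Ω → ℕ),
      (∀ u ∈ f, IsAtomPi H u) → (∀ u ∈ gfac, IsAtomPi H u) →
      f.sum = x → gfac.sum = x → Multiset.card f = Multiset.card gfac) := by
  subst hH
  set H : Set (Ω → ℕ) := {x : Ω → ℕ | ∀ I ∈ Λ, ∑ i ∈ I, x i = C I * x z} with hH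
  -- key construction: given a budget b with room on each block, build g ≤ b with g z = k
  have key : ∀ (k : ℕ) (b : Ω → ℕ), (∀ I ∈ Λ, C I * k ≤ ∑ i ∈ I, b i) →
      ∃ g : Ω → ℕ, (∀ i, i ≠ z → g i ≤ b i) ∧ g z = k ∧
        ∀ J ∈ Λ, ∑ i ∈ J, g i = C J * k := by
    intro k b hb
    have h1 : ∀ I ∈ Λ, ∃ y : Ω → ℕ, (∀ i, y i ≤ b i) ∧ (∀ i, i ∉ I → y i = 0) ∧
        ∑ i ∈ I, y i = C I * k := fun I hI => finsetSplit17 I b _ (hb I hI)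
    choose Y hY1 hY2 hY3 using h1
    refine ⟨fun i => if i = z then k else ∑ I ∈ Λ.attach, Y I.1 I.2 i, ?_, by simp, ?_⟩
    · intro i hi
      simp only [if_neg hi]
      obtain ⟨I₀, hI₀, hiI₀⟩ := hcover i hi
      rw [Finset.sum_eq_single_of_mem ⟨I₀, hI₀⟩ (Finset.mem_attach _ _)]
      · exact hY1 I₀ hI₀ i
      · intro J _ hJne
        apply hY2 J.1 J.2
        intro hiJ
        have hne : J.1 ≠ I₀ := fun h => hJne (Subtype.ext h)
        exact (Finset.disjoint_left.mp (hdisj J.1 J.2 I₀ hI₀ hne) hiJ) hiI₀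
    · intro J hJ
      have hz := hzI J hJ
      have e1 : ∑ i ∈ J, (if i = z then k else ∑ I ∈ Λ.attach, Y I.1 I.2 i)
          = ∑ i ∈ J, ∑ I ∈ Λ.attach, Y I.1 I.2 i :=
        Finset.sum_congr rfl (fun i hi => if_neg (fun h : i = z => hz (h ▸ hi)))
      rw [e1, Finset.sum_comm,
        Finset.sum_eq_single_of_mem ⟨J, hJ⟩ (Finset.mem_attach _ _)]
      · exact hY3 J hJ
      · intro I _ hIne
        apply Finset.sum_eq_zero
        intro i hi
        apply hY2 I.1 I.2
        intro hiI
        have hne : I.1 ≠ J := fun h => hIne (Subtype.ext h)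
        exact (Finset.disjoint_left.mp (hdisj I.1 I.2 J hJ hne) hiI) hi
  -- (T1) units
  have zeroIff : ∀ x ∈ H, (x z = 0 ↔ x = 0) := by
    intro x hx
    constructor
    · intro hxz
      funext i
      rcases eq_or_ne i z with rfl | hne
      · exact hxz
      · obtain ⟨I, hI, hiI⟩ := hcover i hne
        have hs := hx I hI
        rw [hxz, Nat.mul_zero] at hs
        exact (Finset.sum_eq_zero_iff.mp hs) i hiI
    · intro h; rw [h]; rfl
  -- (T1) surjectivity
  have surj : ∀ n : ℕ, ∃ x ∈ H, x z = n := by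
    intro n
    have hb : ∀ I ∈ Λ, C I * n ≤ ∑ _i ∈ I, (∑ J ∈ Λ, C J) * n := by
      intro I hI
      have hcard : 1 ≤ I.card := le_trans (by norm_num) (hsize I hI)
      have hle : C I ≤ ∑ J ∈ Λ, C J :=
        Finset.single_le_sum (f := C) (fun _ _ => Nat.zero_le _) hI
      rw [Finset.sum_const, smul_eq_mul]
      calc C I * n ≤ (∑ J ∈ Λ, C J) * n := Nat.mul_le_mul_right n hle
        _ ≤ I.card * ((∑ J ∈ Λ, C J) * n) := Nat.le_mul_of_pos_left _ hcard
    obtain ⟨g, _, hgz, hgsum⟩ := key n (fun _ => (∑ J ∈ Λ, C J) * n) hb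
    refine ⟨g, ?_, hgz⟩
    intro I hI
    rw [hgsum I hI, hgz]
  -- (T2)
  have lift : ∀ x ∈ H, ∀ k l : ℕ, x z = k + l →
      ∃ y ∈ H, ∃ w ∈ H, x = y + w ∧ y z = k ∧ w z = l := by
    intro x hx k l hkl
    have hb : ∀ I ∈ Λ, C I * k ≤ ∑ i ∈ I, x i := by
      intro I hI
      rw [hx I hI, hkl]
      exact Nat.mul_le_mul_left _ (by omega)
    obtain ⟨g, hgle, hgz, hgsum⟩ := key k x hb
    have hle : ∀ i, g i ≤ x i := by
      intro i
      rcases eq_or_ne i z with rfl | hne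
      · omega
      · exact hgle i hne
    refine ⟨g, ?_, fun i => x i - g i, ?_, ?_, hgz, by show x z - g z = l; omega⟩
    · intro I hI; rw [hgsum I hI, hgz]
    · intro I hI
      have hs := hx I hI
      have hgs := hgsum I hI
      have hsub : ∑ i ∈ I, (x i - g i) = ∑ i ∈ I, x i - ∑ i ∈ I, g i := by
        rw [eq_tsub_iff_add_eq_of_le (Finset.sum_le_sum fun i _ => hle i),
          ← Finset.sum_add_distrib]
        exact Finset.sum_congr rfl fun i _ => by have := hle i; omega
      rw [hsub, hs, hgs]
      show _ = C I * (x z - g z)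
      rw [hkl, hgz, Nat.add_sub_cancel_left, Nat.mul_add]
      omega
    · funext i
      have := hle i
      simp only [Pi.add_apply]
      omega
  -- atoms
  have atomIff : ∀ x ∈ H, (IsAtomPi H x ↔ x z = 1) := by
    intro x hx
    constructor
    · rintro ⟨hxH, hx0, hmin⟩
      have hz0 : x z ≠ 0 := fun h => hx0 ((zeroIff x hx).mp h)
      by_contra h1
      have hsplit : x z = 1 + (x z - 1) := by omega
      obtain ⟨y, hy, w, hw, hxyw, hyz, hwz⟩ := lift x hx 1 (x z - 1) hsplit
      rcases hmin y hy w hw hxyw with h | h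
      · have := (zeroIff y hy).mpr h; omega
      · have := (zeroIff w hw).mpr h; omega
    · intro h1
      refine ⟨hx, fun h => by rw [h] at h1; simp at h1, ?_⟩
      intro y hy w hw hxyw
      have hsum : y z + w z = 1 := by
        have := congrFun hxyw z
        simp only [Pi.add_apply] at this
        omega
      rcases Nat.eq_zero_or_pos (y z) with h | h
      · exact Or.inl ((zeroIff y hy).mp h)
      · exact Or.inr ((zeroIff w hw).mp (by omega))
  -- half-factorial
  have lenEq : ∀ (m : Multiset (Ω → ℕ)), (∀ u ∈ m, IsAtomPi H u) →
      m.sum z = Multiset.card m := by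
    intro m
    induction m using Multiset.induction_on with
    | empty => intro _; simp
    | cons a s ih =>
        intro hm
        have ha : IsAtomPi H a := hm a (Multiset.mem_cons_self a s)
        have haz : a z = 1 := (atomIff a ha.1).mp ha
        have hs : s.sum z = Multiset.card s :=
          ih (fun u hu => hm u (Multiset.mem_cons_of_mem hu))
        rw [Multiset.sum_cons, Multiset.card_cons]
        simp only [Pi.add_apply]
        omega
  refine ⟨surj, zeroIff, lift, atomIff, ?_⟩
  intro x hx f gfac hf hg hfs hgs
  have h1 := lenEq f hf
  have h2 := lenEq gfac hg
  rw [hfs] at h1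
  rw [hgs] at h2
  omega
end

section
/- Let H be a Krull monoid with free abelian class group of rank r ≥ 2 with basis (e_1,…,e_r), and suppose the set G_P of classes containing prime divisors is finite, symmetric (G_P = −G_P), and contains G_r^+ = {Σ_{i∈I} e_i : ∅ ≠ I ⊆ [1,r]}. Then for each k ∈ ℕ, ρ_{2k}(H) = k·D(G_P) and k·D(G_P) + 1 ≤ ρ_{2k+1}(H) ≤ k·D(G_P) + D(G_P)/2. -/
/-- A zero-sum sequence over `G₀ ⊆ ℤ^r`: a finite multiset of elements of `G₀` summing to `0`. -/
def IsZeroSumSeq {r : ℕ} (G₀ : Set (Fin r → ℤ)) (S : Multiset (Fin r → ℤ)) : Prop :=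
  (∀ g ∈ S, g ∈ G₀) ∧ S.sum = 0

/-- An atom (minimal zero-sum sequence) over `G₀`: a nonempty zero-sum sequence with no
proper nonempty zero-sum subsequence. -/
def IsAtomSeq {r : ℕ} (G₀ : Set (Fin r → ℤ)) (S : Multiset (Fin r → ℤ)) : Prop :=
  IsZeroSumSeq G₀ S ∧ S ≠ 0 ∧
    ∀ T : Multiset (Fin r → ℤ), T ≤ S → T ≠ 0 → T.sum = 0 → T = S

/-- The signed support `supp⁺(S) = {g : v_g(S) - v_{-g}(S) ≠ 0}`. -/
def signedSupp {r : ℕ} (S : Multiset (Fin r → ℤ)) : Set (Fin r → ℤ) :=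
  {g | S.count g ≠ S.count (-g)}

/-- An elementary zero-sum sequence over `G₀`: one whose signed support is nonempty and
minimal among nonempty signed supports of zero-sum sequences over `G₀`. -/
def IsElemZeroSumSeq {r : ℕ} (G₀ : Set (Fin r → ℤ)) (S : Multiset (Fin r → ℤ)) : Prop :=
  IsZeroSumSeq G₀ S ∧ signedSupp S ≠ ∅ ∧
    ∀ T : Multiset (Fin r → ℤ), IsZeroSumSeq G₀ T → signedSupp T ≠ ∅ →
      signedSupp T ⊆ signedSupp S → signedSupp T = signedSupp S

/-- An elementary atom over `G₀`. -/
def IsElemAtom {r : ℕ} (G₀ : Set (Fin r → ℤ)) (S : Multiset (Fin r → ℤ)) : Prop :=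
  IsAtomSeq G₀ S ∧ IsElemZeroSumSeq G₀ S

/-- The Davenport constant of `G₀`: the supremum (in `ℕ∞`) of the lengths of atoms
(minimal zero-sum sequences) over `G₀`. -/
noncomputable def Davenport {r : ℕ} (G₀ : Set (Fin r → ℤ)) : ℕ∞ :=
  ⨆ U ∈ {U : Multiset (Fin r → ℤ) | IsAtomSeq G₀ U}, (Multiset.card U : ℕ∞)

/-- The elementary Davenport constant of `G₀`: the supremum (in `ℕ∞`) of the lengths of
elementary atoms over `G₀`. -/
noncomputable def DavenportElem {r : ℕ} (G₀ : Set (Fin r → ℤ)) : ℕ∞ :=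
  ⨆ U ∈ {U : Multiset (Fin r → ℤ) | IsElemAtom G₀ U}, (Multiset.card U : ℕ∞)

/-- The set `G_r⁺` of nonzero vertices of the `r`-dimensional hypercube in `ℤ^r`,
i.e. the nonzero 0-1 vectors. -/
def hypercubePlus (r : ℕ) : Set (Fin r → ℤ) :=
  {g | g ≠ 0 ∧ ∀ i, g i = 0 ∨ g i = 1}

/-- An atom of an additive commutative monoid (assumed reduced). -/
def IsAtomM {H : Type*} [AddCommMonoid H] (u : H) : Prop :=
  u ≠ 0 ∧ ∀ a b : H, u = a + b → a = 0 ∨ b = 0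

/-- `n` is a factorization length of `a`: `a` is a sum of `n` atoms. -/
def HasLen {H : Type*} [AddCommMonoid H] (a : H) (n : ℕ) : Prop :=
  ∃ f : Multiset H, (∀ u ∈ f, IsAtomM u) ∧ f.sum = a ∧ Multiset.card f = n

/-- `ρ_k(H) = sup 𝒰_k(H)`, the supremum (in `ℕ∞`) of all lengths occurring in a set of
lengths that contains `k`. -/
noncomputable def rhoInv (H : Type*) [AddCommMonoid H] (k : ℕ) : ℕ∞ :=
  ⨆ n ∈ {n : ℕ | ∃ a : H, HasLen a k ∧ HasLen a n}, (n : ℕ∞)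

/-!
The block map `a ↦ [cl p : p ∣ φ a]` is a transfer homomorphism from `H` onto the zero-sum
sequences over `G_P`, so atoms and factorization lengths of `H` are those of minimal zero-sum
sequences. Every atom `U` has `2 ≤ |U| + v₀(U) ≤ D(G_P)` and this weight is additive, so an
element with factorizations of lengths `K` and `N` satisfies `2N ≤ K·D(G_P)`. Conversely, for an
atom `U` with `0 ∉ U` the identity `U^k (-U)^k = ∏_{g ∈ U} (g (-g))^k` yields an element with
lengths `2k` and `k|U|`; multiplying by the atom `e₁ (-e₁)` yields lengths `2k + 1` and `k|U| + 1`.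
-/

theorem Multiset.exists_le_map_eq_of_le_map {α β : Type*} {f : α → β} {s : Multiset α}
    {t : Multiset β} (h : t ≤ s.map f) : ∃ u ≤ s, u.map f = t := by
  induction s using Quotient.inductionOn
  induction t using Quotient.inductionOn
  obtain ⟨l, hl, hsub⟩ := h
  obtain ⟨l', hl', rfl⟩ := List.sublist_map_iff.mp hsub
  exact ⟨l', hl'.subperm, Quotient.sound hl⟩

theorem Multiset.exists_map_eq_of_forall_mem_range {α β : Type*} {f : α → β}
    {t : Multiset β} (h : ∀ b ∈ t, b ∈ Set.range f) : ∃ s : Multiset α, s.map f = t := by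
  induction t using Multiset.induction_on with
  | empty => exact ⟨0, rfl⟩
  | cons b t ih =>
    obtain ⟨a, rfl⟩ := h b (mem_cons_self b t)
    obtain ⟨s, rfl⟩ := ih fun b hb => h b (mem_cons_of_mem hb)
    exact ⟨a ::ₘ s, map_cons f a s⟩

theorem Multiset.sum_map_pair {α : Type*} (f : α → α) (U : Multiset α) :
    (U.map fun a => ({a, f a} : Multiset α)).sum = U + U.map f := by
  induction U using Multiset.induction_on with
  | empty => simp
  | cons a U ih =>
    rw [map_cons, sum_cons, ih, map_cons, insert_eq_cons, ← singleton_add, ← singleton_add,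
      ← singleton_add]
    abel

theorem Finsupp.sum_map_toMultiset {P G : Type*} [AddCommGroup G] (x : P →₀ ℕ) (cl : P → G) :
    ((toMultiset x).map cl).sum = x.sum fun p n => (n : ℤ) • cl p := by
  rw [toMultiset_map, sum_toMultiset, sum_mapDomain_index (by simp) (by simp [add_smul])]
  simp only [natCast_zsmul]

theorem Finsupp.toMultiset_le_toMultiset {P : Type*} {x y : P →₀ ℕ} :
    toMultiset x ≤ toMultiset y ↔ x ≤ y := by
  classical exact orderIsoMultiset.le_iff_le

section Transfer

variable {H P G : Type*} [AddCommMonoid H]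

noncomputable def blockOf (φ : H →+ (P →₀ ℕ)) (cl : P → G) : H →+ Multiset G :=
  (Multiset.mapAddMonoidHom cl).comp (Finsupp.toMultiset.comp φ)

theorem blockOf_apply (φ : H →+ (P →₀ ℕ)) (cl : P → G) (a : H) :
    blockOf φ cl a = (Finsupp.toMultiset (φ a)).map cl := rfl

variable [AddCommGroup G]

/-- `H` is reduced, `φ` is a divisor homomorphism into the free monoid over `P`, and `cl`
embeds its class group `(P →₀ ℕ) / φ(H)` into `G`, with `cl p` the class of the prime `p`. -/
structure IsClassMap (φ : H →+ (P →₀ ℕ)) (cl : P → G) : Prop where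
  eq_zero_of_add_eq_zero : ∀ a b : H, a + b = 0 → a = 0
  exists_add_of_le : ∀ a b : H, φ a ≤ φ b → ∃ c : H, b = a + c
  exists_add_eq_add_iff : ∀ x y : P →₀ ℕ, (∃ a b : H, x + φ a = y + φ b) ↔
    (x.sum fun p n => (n : ℤ) • cl p) = (y.sum fun p n => (n : ℤ) • cl p)

namespace IsClassMap

variable {φ : H →+ (P →₀ ℕ)} {cl : P → G} (h : IsClassMap φ cl)
include h

theorem exists_eq_iff (x : P →₀ ℕ) :
    (∃ a, φ a = x) ↔ ((Finsupp.toMultiset x).map cl).sum = 0 := by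
  rw [Finsupp.sum_map_toMultiset]
  constructor
  · rintro ⟨a, rfl⟩
    simpa using (h.exists_add_eq_add_iff (φ a) 0).mp ⟨0, a, by simp⟩
  · intro hx
    obtain ⟨a, b, hab⟩ := (h.exists_add_eq_add_iff x 0).mpr (by simpa using hx)
    rw [zero_add] at hab
    obtain ⟨c, rfl⟩ := h.exists_add_of_le a b (hab ▸ le_add_self)
    refine ⟨c, add_right_cancel (b := φ a) ?_⟩
    rw [hab, map_add, add_comm]

theorem sum_blockOf (a : H) : (blockOf φ cl a).sum = 0 :=
  (h.exists_eq_iff (φ a)).mp ⟨a, rfl⟩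

theorem blockOf_eq_zero_iff {a : H} : blockOf φ cl a = 0 ↔ a = 0 := by
  refine ⟨fun ha => ?_, fun ha => by rw [ha, map_zero]⟩
  have hle : φ a ≤ φ 0 := by
    rw [← Finsupp.toMultiset_le_toMultiset, map_zero, map_zero]
    exact (Multiset.map_eq_zero.mp ha).le
  obtain ⟨c, hc⟩ := h.exists_add_of_le a 0 hle
  exact h.eq_zero_of_add_eq_zero a c hc.symm

theorem exists_toMultiset_eq {S : Multiset P} (hS : (S.map cl).sum = 0) :
    ∃ a, Finsupp.toMultiset (φ a) = S := by
  classical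
  obtain ⟨a, ha⟩ := (h.exists_eq_iff (Multiset.toFinsupp S)).mpr (by simpa using hS)
  exact ⟨a, by simp [ha]⟩

theorem exists_blockOf_eq {T : Multiset G} (hT : ∀ g ∈ T, g ∈ Set.range cl) (h0 : T.sum = 0) :
    ∃ a, blockOf φ cl a = T := by
  obtain ⟨S, rfl⟩ := Multiset.exists_map_eq_of_forall_mem_range hT
  obtain ⟨a, ha⟩ := h.exists_toMultiset_eq h0
  exact ⟨a, by rw [blockOf_apply, ha]⟩

theorem exists_add_blockOf_eq {a : H} {T : Multiset G} (hle : T ≤ blockOf φ cl a)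
    (h0 : T.sum = 0) : ∃ c d, a = c + d ∧ blockOf φ cl c = T := by
  obtain ⟨S, hS, rfl⟩ := Multiset.exists_le_map_eq_of_le_map hle
  obtain ⟨c, hc⟩ := h.exists_toMultiset_eq h0
  obtain ⟨d, rfl⟩ := h.exists_add_of_le c a (by rwa [← Finsupp.toMultiset_le_toMultiset, hc])
  exact ⟨c, d, rfl, by rw [blockOf_apply, hc]⟩

end IsClassMap

end Transfer

section AtomSequences

variable {r : ℕ} {G₀ : Set (Fin r → ℤ)} {U : Multiset (Fin r → ℤ)}

theorem IsAtomSeq.eq_singleton_zero (hU : IsAtomSeq G₀ U) (h0 : (0 : Fin r → ℤ) ∈ U) :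
    U = {0} :=
  (hU.2.2 {0} (Multiset.singleton_le.mpr h0) (by simp) (by simp)).symm

theorem isAtomSeq_pair {g : Fin r → ℤ} (hg : g ∈ G₀) (hng : -g ∈ G₀) (hg0 : g ≠ 0) :
    IsAtomSeq G₀ {g, -g} := by
  refine ⟨⟨by simp [hg, hng], by simp⟩, by simp, fun T hle hT0 hT => ?_⟩
  refine Multiset.eq_of_le_of_card_le hle ?_
  rcases Nat.lt_or_ge (Multiset.card T) 2 with hlt | h2
  · obtain ⟨x, rfl⟩ : ∃ x, T = {x} :=
      Multiset.card_eq_one.mp (by have := Multiset.card_pos.mpr hT0; omega)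
    obtain rfl : x = 0 := by simpa using hT
    have h0 := Multiset.singleton_le.mp hle
    simp [eq_comm, hg0] at h0
  · simpa using h2

theorem IsAtomSeq.map_neg (hsymm : ∀ g ∈ G₀, -g ∈ G₀) (hU : IsAtomSeq G₀ U) :
    IsAtomSeq G₀ (U.map Neg.neg) := by
  obtain ⟨⟨hmem, hsum⟩, hU0, hmin⟩ := hU
  refine ⟨⟨by simpa using fun g hg => hsymm g (hmem g hg), by simp [Multiset.sum_map_neg', hsum]⟩,
    by simpa using hU0, fun T hle hT0 hT => ?_⟩
  have := hmin (T.map Neg.neg) (by simpa using Multiset.map_le_map (f := Neg.neg) hle)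
    (by simpa using hT0) (by simp [Multiset.sum_map_neg', hT])
  simp [← this, Multiset.map_map]

theorem isZeroSumSeq_sum {F : Multiset (Multiset (Fin r → ℤ))}
    (hF : ∀ S ∈ F, IsZeroSumSeq G₀ S) : IsZeroSumSeq G₀ F.sum := by
  refine ⟨fun g hg => ?_, ?_⟩
  · obtain ⟨S, hS, hg⟩ := Multiset.mem_join.mp hg
    exact (hF S hS).1 g hg
  · rw [← Multiset.coe_sumAddMonoidHom, map_multiset_sum]
    exact Multiset.sum_eq_zero (by simpa using fun S hS => (hF S hS).2)

theorem IsAtomSeq.card_le_davenport (hU : IsAtomSeq G₀ U) :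
    (Multiset.card U : ℕ∞) ≤ Davenport G₀ :=
  le_iSup₂ (f := fun U (_ : U ∈ {U | IsAtomSeq G₀ U}) => (Multiset.card U : ℕ∞)) U hU

theorem davenport_eq_iSup :
    Davenport G₀ = ⨆ U : {U // IsAtomSeq G₀ U}, (Multiset.card U.1 : ℕ∞) :=
  iSup_subtype'

theorem IsAtomSeq.two_le_card_add_count_zero (hU : IsAtomSeq G₀ U) :
    2 ≤ Multiset.card U + U.count 0 := by
  by_cases h0 : (0 : Fin r → ℤ) ∈ U
  · simp [hU.eq_singleton_zero h0]
  · by_contra! hlt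
    obtain ⟨x, rfl⟩ : ∃ x, U = {x} :=
      Multiset.card_eq_one.mp (by have := Multiset.card_pos.mpr hU.2.1; omega)
    exact h0 (by simpa using hU.1.2.symm)

theorem IsAtomSeq.card_add_count_zero_le_davenport (hD : 2 ≤ Davenport G₀)
    (hU : IsAtomSeq G₀ U) : ((Multiset.card U + U.count 0 : ℕ) : ℕ∞) ≤ Davenport G₀ := by
  by_cases h0 : (0 : Fin r → ℤ) ∈ U
  · simpa [hU.eq_singleton_zero h0] using hD
  · simpa [Multiset.count_eq_zero_of_notMem h0] using hU.card_le_davenport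

end AtomSequences

theorem le_rhoInv {H : Type*} [AddCommMonoid H] {a : H} {K N : ℕ} (hK : HasLen a K)
    (hN : HasLen a N) : (N : ℕ∞) ≤ rhoInv H K :=
  le_iSup₂ (f := fun n (_ : n ∈ {n : ℕ | ∃ a : H, HasLen a K ∧ HasLen a n}) => (n : ℕ∞))
    N ⟨a, hK, hN⟩

theorem card_add_count_zero_blockOf_sum {H P : Type*} [AddCommMonoid H] {r : ℕ}
    (φ : H →+ (P →₀ ℕ)) (cl : P → Fin r → ℤ) (f : Multiset H) :
    Multiset.card (blockOf φ cl f.sum) + (blockOf φ cl f.sum).count 0 =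
      (f.map fun u => Multiset.card (blockOf φ cl u) + (blockOf φ cl u).count 0).sum := by
  induction f using Multiset.induction_on with
  | empty => simp
  | cons u f ih =>
    simp only [Multiset.sum_cons, map_add, Multiset.card_add, Multiset.count_add,
      Multiset.map_cons, ← ih]
    ring

namespace IsClassMap

variable {H P : Type*} [AddCommMonoid H] {r : ℕ} {φ : H →+ (P →₀ ℕ)} {cl : P → Fin r → ℤ}
  (h : IsClassMap φ cl)
include h

theorem isZeroSumSeq_blockOf (a : H) : IsZeroSumSeq (Set.range cl) (blockOf φ cl a) := by
  refine ⟨fun g hg => ?_, h.sum_blockOf a⟩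
  obtain ⟨p, -, rfl⟩ := Multiset.mem_map.mp hg
  exact ⟨p, rfl⟩

theorem isAtomM_iff {a : H} : IsAtomM a ↔ IsAtomSeq (Set.range cl) (blockOf φ cl a) := by
  constructor
  · rintro ⟨ha0, hmin⟩
    refine ⟨h.isZeroSumSeq_blockOf a, h.blockOf_eq_zero_iff.not.mpr ha0, fun T hle hT0 hT => ?_⟩
    obtain ⟨c, d, rfl, rfl⟩ := h.exists_add_blockOf_eq hle hT
    rcases hmin c d rfl with rfl | rfl
    · exact absurd (map_zero _) hT0
    · rw [add_zero]
  · rintro ⟨-, hb0, hmin⟩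
    refine ⟨fun ha => hb0 (h.blockOf_eq_zero_iff.mpr ha), fun c d hcd => ?_⟩
    subst hcd
    by_cases hc : c = 0
    · exact Or.inl hc
    have hfull := hmin (blockOf φ cl c) (by simp) (h.blockOf_eq_zero_iff.not.mpr hc)
      (h.sum_blockOf c)
    rw [map_add] at hfull
    exact Or.inr (h.blockOf_eq_zero_iff.mp (by simpa using hfull))

theorem hasLen_of_blockOf_eq_sum {F : Multiset (Multiset (Fin r → ℤ))}
    (hF : ∀ S ∈ F, IsAtomSeq (Set.range cl) S) {a : H} (ha : blockOf φ cl a = F.sum) :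
    HasLen a (Multiset.card F) := by
  induction F using Multiset.induction_on generalizing a with
  | empty => exact ⟨0, by simp, by simpa [eq_comm] using h.blockOf_eq_zero_iff.mp ha, rfl⟩
  | cons S F ih =>
    have hS := hF S (Multiset.mem_cons_self S F)
    rw [Multiset.sum_cons] at ha
    obtain ⟨c, d, rfl, hc⟩ := h.exists_add_blockOf_eq (ha ▸ Multiset.le_add_right _ _) hS.1.2
    rw [map_add, hc] at ha
    obtain ⟨f, hf, rfl, hcard⟩ := ih (fun T hT => hF T (Multiset.mem_cons_of_mem hT))
      (add_left_cancel ha)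
    refine ⟨c ::ₘ f, ?_, Multiset.sum_cons c f, by simp [hcard]⟩
    intro u hu
    rcases Multiset.mem_cons.mp hu with rfl | hu
    · exact h.isAtomM_iff.mpr (hc ▸ hS)
    · exact hf u hu

theorem exists_hasLen_hasLen_of_sum_eq {F₁ F₂ : Multiset (Multiset (Fin r → ℤ))}
    (hF₁ : ∀ S ∈ F₁, IsAtomSeq (Set.range cl) S) (hF₂ : ∀ S ∈ F₂, IsAtomSeq (Set.range cl) S)
    (hsum : F₁.sum = F₂.sum) :
    ∃ a : H, HasLen a (Multiset.card F₁) ∧ HasLen a (Multiset.card F₂) := by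
  have hzero := isZeroSumSeq_sum fun S hS => (hF₁ S hS).1
  obtain ⟨a, ha⟩ := h.exists_blockOf_eq hzero.1 hzero.2
  exact ⟨a, h.hasLen_of_blockOf_eq_sum hF₁ ha, h.hasLen_of_blockOf_eq_sum hF₂ (ha.trans hsum)⟩

theorem two_mul_le_mul_davenport (hD : 2 ≤ Davenport (Set.range cl)) {a : H} {K N : ℕ}
    (hK : HasLen a K) (hN : HasLen a N) : 2 * (N : ℕ∞) ≤ K * Davenport (Set.range cl) := by
  obtain ⟨f, hf, rfl, rfl⟩ := hN
  obtain ⟨g, hg, hgf, rfl⟩ := hK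
  have hlow : 2 * Multiset.card f ≤
      Multiset.card (blockOf φ cl f.sum) + (blockOf φ cl f.sum).count 0 := by
    rw [mul_comm, ← smul_eq_mul, card_add_count_zero_blockOf_sum,
      ← Multiset.card_map (fun u => _) f]
    exact Multiset.card_nsmul_le_sum fun n hn => by
      obtain ⟨u, hu, rfl⟩ := Multiset.mem_map.mp hn
      exact (h.isAtomM_iff.mp (hf u hu)).two_le_card_add_count_zero
  have hup : ((Multiset.card (blockOf φ cl g.sum) + (blockOf φ cl g.sum).count 0 : ℕ) : ℕ∞) ≤
      Multiset.card g • Davenport (Set.range cl) := by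
    rw [card_add_count_zero_blockOf_sum, Nat.cast_multiset_sum, Multiset.map_map,
      ← Multiset.card_map (fun u => _) g]
    exact Multiset.sum_le_card_nsmul _ _ fun n hn => by
      obtain ⟨u, hu, rfl⟩ := Multiset.mem_map.mp hn
      exact (h.isAtomM_iff.mp (hg u hu)).card_add_count_zero_le_davenport hD
  rw [hgf, nsmul_eq_mul] at hup
  exact le_trans (by exact_mod_cast hlow) hup

theorem two_mul_rhoInv_le (hD : 2 ≤ Davenport (Set.range cl)) (K : ℕ) :
    2 * rhoInv H K ≤ K * Davenport (Set.range cl) := by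
  rw [rhoInv, ENat.mul_iSup]
  refine iSup_le fun N => ?_
  rw [ENat.mul_iSup]
  exact iSup_le fun ⟨_, hK, hN⟩ => h.two_mul_le_mul_davenport hD hK hN

theorem exists_hasLen_of_isAtomSeq (hsymm : ∀ g ∈ Set.range cl, -g ∈ Set.range cl)
    {U : Multiset (Fin r → ℤ)} (hU : IsAtomSeq (Set.range cl) U) (h0 : (0 : Fin r → ℤ) ∉ U)
    (k : ℕ) {E : Multiset (Multiset (Fin r → ℤ))} (hE : ∀ S ∈ E, IsAtomSeq (Set.range cl) S) :
    ∃ a : H, HasLen a (2 * k + Multiset.card E) ∧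
      HasLen a (k * Multiset.card U + Multiset.card E) := by
  set F₁ := Multiset.replicate k U + Multiset.replicate k (U.map Neg.neg) + E
  set F₂ := (k • U).map (fun g => ({g, -g} : Multiset (Fin r → ℤ))) + E
  have hF₁ : ∀ S ∈ F₁, IsAtomSeq (Set.range cl) S := by
    intro S hS
    simp only [F₁, Multiset.mem_add, Multiset.mem_replicate] at hS
    rcases hS with (⟨-, rfl⟩ | ⟨-, rfl⟩) | hS
    exacts [hU, hU.map_neg hsymm, hE S hS]
  have hF₂ : ∀ S ∈ F₂, IsAtomSeq (Set.range cl) S := by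
    intro S hS
    rcases Multiset.mem_add.mp hS with hS | hS
    · obtain ⟨g, hg, rfl⟩ := Multiset.mem_map.mp hS
      have hgU := Multiset.mem_of_mem_nsmul hg
      exact isAtomSeq_pair (hU.1.1 g hgU) (hsymm g (hU.1.1 g hgU)) (ne_of_mem_of_not_mem hgU h0)
    · exact hE S hS
  have hsum : F₁.sum = F₂.sum := by
    rw [Multiset.sum_add, Multiset.sum_add, Multiset.sum_add, Multiset.sum_replicate,
      Multiset.sum_replicate, Multiset.map_nsmul, Multiset.sum_nsmul, Multiset.sum_map_pair Neg.neg,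
      nsmul_add]
  obtain ⟨a, h₁, h₂⟩ := h.exists_hasLen_hasLen_of_sum_eq hF₁ hF₂ hsum
  exact ⟨a, by simpa [F₁, two_mul] using h₁, by simpa [F₂] using h₂⟩

theorem mul_card_add_card_le_rhoInv (hsymm : ∀ g ∈ Set.range cl, -g ∈ Set.range cl)
    {e : Fin r → ℤ} (he : e ∈ Set.range cl) (he0 : e ≠ 0)
    {U : Multiset (Fin r → ℤ)} (hU : IsAtomSeq (Set.range cl) U)
    (k : ℕ) {E : Multiset (Multiset (Fin r → ℤ))} (hE : ∀ S ∈ E, IsAtomSeq (Set.range cl) S) :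
    ((k * Multiset.card U + Multiset.card E : ℕ) : ℕ∞) ≤ rhoInv H (2 * k + Multiset.card E) := by
  obtain ⟨V, hV, hV0, hUV⟩ : ∃ V, IsAtomSeq (Set.range cl) V ∧ (0 : Fin r → ℤ) ∉ V ∧
      Multiset.card U ≤ Multiset.card V := by
    by_cases h0 : (0 : Fin r → ℤ) ∈ U
    · refine ⟨{e, -e}, isAtomSeq_pair he (hsymm e he) he0, ?_, by simp [hU.eq_singleton_zero h0]⟩
      simp [eq_comm, he0]
    · exact ⟨U, hU, h0, le_rfl⟩
  obtain ⟨a, hK, hN⟩ := h.exists_hasLen_of_isAtomSeq (H := H) hsymm hV hV0 k hE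
  exact le_trans (by gcongr) (le_rhoInv hK hN)

end IsClassMap

theorem Pi.single_one_mem_hypercubePlus {r : ℕ} (i : Fin r) : Pi.single i 1 ∈ hypercubePlus r :=
  ⟨by simp, fun j => by rcases eq_or_ne j i with rfl | hj <;> simp [*]⟩

theorem stmt19_general (r : ℕ) (hr : 2 ≤ r)
    {H : Type*} [AddCancelCommMonoid H]
    (hred : ∀ a b : H, a + b = 0 → a = 0)
    {P : Type*} (φ : H →+ (P →₀ ℕ))
    (hdiv : ∀ a b : H, φ a ≤ φ b → ∃ c : H, b = a + c)
    (cl : P → (Fin r → ℤ))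
    (hker : ∀ x y : P →₀ ℕ, (∃ a b : H, x + φ a = y + φ b) ↔
      (x.sum fun p n => (n : ℤ) • cl p) = (y.sum fun p n => (n : ℤ) • cl p))
    (hsymm : ∀ g ∈ Set.range cl, -g ∈ Set.range cl)
    (hcube : hypercubePlus r ⊆ Set.range cl) :
    ∀ k : ℕ, 1 ≤ k →
      rhoInv H (2 * k) = (k : ℕ∞) * Davenport (Set.range cl) ∧
      (k : ℕ∞) * Davenport (Set.range cl) + 1 ≤ rhoInv H (2 * k + 1) ∧
      2 * rhoInv H (2 * k + 1) ≤
        ((2 * k : ℕ) : ℕ∞) * Davenport (Set.range cl) + Davenport (Set.range cl) := by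
  intro k _
  have h : IsClassMap φ cl := ⟨hred, hdiv, hker⟩
  set e : Fin r → ℤ := Pi.single ⟨0, by omega⟩ 1
  have he : e ∈ Set.range cl := hcube (Pi.single_one_mem_hypercubePlus _)
  have he0 : e ≠ 0 := (Pi.single_one_mem_hypercubePlus _).1
  have hpair := isAtomSeq_pair he (hsymm e he) he0
  have hD : 2 ≤ Davenport (Set.range cl) := by simpa using hpair.card_le_davenport
  have : Nonempty {U // IsAtomSeq (Set.range cl) U} := ⟨⟨_, hpair⟩⟩
  refine ⟨le_antisymm ?_ ?_, ?_, ?_⟩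
  · rw [← ENat.mul_le_mul_left_iff two_ne_zero (by decide), ← mul_assoc]
    exact_mod_cast h.two_mul_rhoInv_le hD (2 * k)
  · rw [davenport_eq_iSup, ENat.mul_iSup]
    exact iSup_le fun U => by
      simpa using h.mul_card_add_card_le_rhoInv hsymm he he0 U.2 k (E := 0) (by simp)
  · rw [davenport_eq_iSup, ENat.mul_iSup, ENat.iSup_add]
    exact iSup_le fun U => by
      simpa using h.mul_card_add_card_le_rhoInv hsymm he he0 U.2 k (E := {_}) (by simpa using hpair)
  · exact (h.two_mul_rhoInv_le hD _).trans_eq (by push_cast; ring)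

theorem stmt19 (r : ℕ) (hr : 2 ≤ r)
    {H : Type*} [AddCancelCommMonoid H]
    (hred : ∀ a b : H, a + b = 0 → a = 0)
    {P : Type*} (φ : H →+ (P →₀ ℕ))
    (hdiv : ∀ a b : H, φ a ≤ φ b → ∃ c : H, b = a + c)
    (hth : ∀ x : P →₀ ℕ, ∃ (T : Finset H) (hT : T.Nonempty),
      ∀ p : P, T.inf' hT (fun a => φ a p) = x p)
    (cl : P → (Fin r → ℤ))
    (hker : ∀ x y : P →₀ ℕ, (∃ a b : H, x + φ a = y + φ b) ↔
      (x.sum fun p n => (n : ℤ) • cl p) = (y.sum fun p n => (n : ℤ) • cl p))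
    (hsurj : ∀ g : Fin r → ℤ, ∃ x y : P →₀ ℕ,
      (x.sum fun p n => (n : ℤ) • cl p) - (y.sum fun p n => (n : ℤ) • cl p) = g)
    (hfin : (Set.range cl).Finite)
    (hsymm : ∀ g ∈ Set.range cl, -g ∈ Set.range cl)
    (hcube : hypercubePlus r ⊆ Set.range cl) :
    ∀ k : ℕ, 1 ≤ k →
      rhoInv H (2 * k) = (k : ℕ∞) * Davenport (Set.range cl) ∧
      (k : ℕ∞) * Davenport (Set.range cl) + 1 ≤ rhoInv H (2 * k + 1) ∧
      2 * rhoInv H (2 * k + 1) ≤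
        ((2 * k : ℕ) : ℕ∞) * Davenport (Set.range cl) + Davenport (Set.range cl) :=
  stmt19_general r hr hred φ hdiv cl hker hsymm hcube
end
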